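/- The set 𝓛 is disjoint from the union over n ≥ 0 of the open intervals (1/6 + (1/93)·4^{-n}, 1/6 + (1/84)·4^{-n}). -/
import Mathlib


open Filter Set MeasureTheory

noncomputable def T (m : ℕ) (x : ℝ) : ℝ := (1 - x) / m


noncomputable def orb (m : ℕ → ℕ) : ℕ → ℝ
  | 0 => 0
  | n + 1 => T (m n) (orb m n)

noncomputable def Lset : Set ℝ :=
  {x | ∃ m : ℕ → ℕ, (∀ i, 2 ≤ m i) ∧ Filter.atTop.liminf (fun n => orb m n) = x}

lemma orb_bounds (m : ℕ → ℕ) (hm : ∀ i, 2 ≤ m i) :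
    ∀ k, 0 ≤ orb m k ∧ orb m k ≤ 1 := by
  intro k
  induction k with
  | zero => simp [orb]
  | succ k ih =>
    have hmk : (2:ℝ) ≤ (m k : ℝ) := by exact_mod_cast hm k
    have h0 : (0:ℝ) < (m k : ℝ) := by linarith
    have heq : orb m (k+1) = (1 - orb m k) / (m k) := rfl
    rw [heq]
    constructor
    · exact div_nonneg (by linarith [ih.2]) h0.le
    · rw [div_le_one h0]; linarith [ih.1]

lemma step0 (q a ε u w : ℝ) (M : ℕ) (hM : 2 ≤ M)
    (hq : 1 ≤ q) (hqa1 : 1/93 < q*a) (hqa2 : q*a < 1/84)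
    (hε0 : 0 < ε) (hεa : 100*ε ≤ a)
    (hu1 : 1/6 + a - ε ≤ u) (hu2 : 2*u ≤ 1 - (1/6 + a) + ε)
    (hw : (M:ℝ) * w = 1 - u)
    (hcw : |w - (1/6 + a)| ≤ 4*ε) :
    |u - (1/3 - 4*a)| ≤ 16*ε := by
  have hM2 : (2:ℝ) ≤ (M:ℝ) := by exact_mod_cast hM
  have hq0 : (0:ℝ) < q := by linarith
  have ha0 : 0 < a := by
    rcases le_or_gt a 0 with h | h
    · have := mul_nonpos_of_nonneg_of_nonpos hq0.le h
      linarith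
    · exact h
  have haq : a ≤ q*a := le_mul_of_one_le_left ha0.le hq
  have ha84 : a < 1/84 := by linarith
  rw [abs_le] at hcw
  rcases le_or_gt M 4 with h4 | h4
  · interval_cases M
    · exfalso; push_cast at hw; linarith [hcw.1, hcw.2]
    · exfalso; push_cast at hw; linarith [hcw.1, hcw.2]
    · rw [abs_le]; push_cast at hw
      constructor
      · linarith [hcw.2]
      · linarith [hcw.1]
  · exfalso
    have h5 : (5:ℝ) ≤ (M:ℝ) := by exact_mod_cast h4
    have hw0 : (0:ℝ) ≤ w := by linarith [hcw.1]
    have hle : 5*w ≤ (M:ℝ)*w := mul_le_mul_of_nonneg_right h5 hw0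
    linarith [hcw.1]

lemma stepk (q a ε u w t2 s : ℝ) (M : ℕ) (hM : 2 ≤ M)
    (hq : 1 ≤ q) (hqa1 : 1/93 < q*a) (hqa2 : q*a < 1/84)
    (hε0 : 0 < ε) (hεa : 100*ε ≤ a) (hε16 : 16*q^2*ε ≤ 1/100000)
    (ht2 : 2 ≤ t2) (ht2q : t2 ≤ 4*q)
    (hs1 : s ≤ t2) (hs2 : -t2 ≤ s)
    (hu1 : 1/6 + a - ε ≤ u)
    (hw : (M:ℝ) * w = 1 - u)
    (hcw : |w - (1/3 - s*a)| ≤ t2^2*ε) :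
    |u - (1/3 + 2*(s*a))| ≤ (2*t2)^2*ε := by
  have hM2 : (2:ℝ) ≤ (M:ℝ) := by exact_mod_cast hM
  have hq0 : (0:ℝ) < q := by linarith
  have ha0 : 0 < a := by
    rcases le_or_gt a 0 with h | h
    · have := mul_nonpos_of_nonneg_of_nonpos hq0.le h
      linarith
    · exact h
  have hsa1 : s*a ≤ t2*a := mul_le_mul_of_nonneg_right hs1 ha0.le
  have hsa2 : -(t2*a) ≤ s*a := by
    have := mul_le_mul_of_nonneg_right hs2 ha0.le
    linarith
  have ht2a : t2*a ≤ 4*(q*a) := by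
    have := mul_le_mul_of_nonneg_right ht2q ha0.le
    linarith
  have hA : s*a < 1/21 := by linarith
  have hB : -(1/21) < s*a := by linarith
  have hrr : t2^2 ≤ 16*q^2 := by nlinarith
  have hr : t2^2*ε ≤ 1/100000 := by
    have := mul_le_mul_of_nonneg_right hrr hε0.le
    linarith
  have hr0 : 0 ≤ t2^2*ε := by positivity
  have h4t : (2*t2)^2*ε = 4*(t2^2*ε) := by ring
  rw [abs_le] at hcw
  rcases le_or_gt M 4 with h4 | h4
  · interval_cases M
    · rw [abs_le]; push_cast at hw
      constructor
      · linarith [hcw.2]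
      · linarith [hcw.1]
    · exfalso; push_cast at hw
      linarith [hcw.1]
    · exfalso; push_cast at hw
      linarith [hcw.1]
  · exfalso
    have h5 : (5:ℝ) ≤ (M:ℝ) := by exact_mod_cast h4
    have hw0 : (0:ℝ) ≤ w := by linarith [hcw.1]
    have hle : 5*w ≤ (M:ℝ)*w := mul_le_mul_of_nonneg_right h5 hw0
    linarith [hcw.1]

set_option maxHeartbeats 2000000 in
theorem stmt12 :
    Lset ∩ (⋃ n : ℕ, Set.Ioo (1/6 + 1/93 * (1/4 : ℝ) ^ n) (1/6 + 1/84 * (1/4 : ℝ) ^ n)) =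
      ∅ := by
  rw [eq_empty_iff_forall_notMem]
  rintro x ⟨⟨m, hm2, hlim⟩, hxU⟩
  rw [mem_iUnion] at hxU
  obtain ⟨n, hn⟩ := hxU
  rw [mem_Ioo] at hn
  obtain ⟨hx1, hx2⟩ := hn
  obtain ⟨q, hqdef⟩ : ∃ q : ℝ, q = (4:ℝ)^n := ⟨_, rfl⟩
  have hq : (1:ℝ) ≤ q := by
    rw [hqdef]
    simpa using pow_le_pow_left₀ (by norm_num : (0:ℝ) ≤ 1) (by norm_num : (1:ℝ) ≤ 4) n
  have hq0 : (0:ℝ) < q := by linarith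
  have hq14 : ((1:ℝ)/4)^n = 1/q := by rw [hqdef, div_pow, one_pow]
  obtain ⟨a, hadef⟩ : ∃ a : ℝ, a = x - 1/6 := ⟨_, rfl⟩
  have hxeq : x = 1/6 + a := by rw [hadef]; ring
  have ha1 : 1/(93*q) < a := by
    rw [hq14] at hx1
    have h : (1:ℝ)/93 * (1/q) = 1/(93*q) := by ring
    rw [h] at hx1; rw [hadef]; linarith
  have ha2 : a < 1/(84*q) := by
    rw [hq14] at hx2
    have h : (1:ℝ)/84 * (1/q) = 1/(84*q) := by ring
    rw [h] at hx2; rw [hadef]; linarith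
  have hqa1 : 1/93 < q*a := by
    rw [div_lt_iff₀ (by positivity : (0:ℝ) < 93*q)] at ha1
    have h : a*(93*q) = 93*(q*a) := by ring
    linarith
  have hqa2 : q*a < 1/84 := by
    rw [lt_div_iff₀ (by positivity : (0:ℝ) < 84*q)] at ha2
    have h : a*(84*q) = 84*(q*a) := by ring
    linarith
  have ha0 : 0 < a := lt_trans (by positivity) ha1
  obtain ⟨ε, hεdef⟩ : ∃ e : ℝ, e = 1/(1600000*q^2) := ⟨_, rfl⟩
  have hε0 : 0 < ε := by rw [hεdef]; positivity
  have hε16 : 16*q^2*ε ≤ 1/100000 := by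
    have h : 16*q^2*ε = 1/100000 := by
      rw [hεdef]; field_simp; ring
    linarith
  have hεa : 100*ε ≤ a := by
    have h1 : 100*ε ≤ 1/(93*q) := by
      rw [hεdef, mul_one_div, div_le_div_iff₀ (by positivity) (by positivity)]
      nlinarith [mul_le_mul_of_nonneg_left hq (by positivity : (0:ℝ) ≤ 16000*q)]
    linarith
  -- liminf consequences
  have hb := orb_bounds m hm2
  have hband : IsBoundedUnder (· ≤ ·) atTop (fun k => orb m k) :=
    isBoundedUnder_of ⟨1, fun k => (hb k).2⟩
  have hbelow : IsBoundedUnder (· ≥ ·) atTop (fun k => orb m k) :=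
    isBoundedUnder_of ⟨0, fun k => (hb k).1⟩
  have hcob : IsCoboundedUnder (· ≥ ·) atTop (fun k => orb m k) :=
    hband.isCoboundedUnder_ge
  have hev : ∀ᶠ j in atTop, x - ε < orb m j :=
    eventually_lt_of_lt_liminf (by rw [hlim]; linarith) hbelow
  have hfr : ∃ᶠ j in atTop, orb m j < x + ε :=
    frequently_lt_of_liminf_lt hcob (by rw [hlim]; linarith)
  obtain ⟨N, hN⟩ := eventually_atTop.mp hev
  obtain ⟨s0, hs0ge, hs0lt⟩ := frequently_atTop.mp hfr (N + (2*n+4))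
  have hwrel : ∀ j, (m j : ℝ) * orb m (j+1) = 1 - orb m j := by
    intro j
    have heq : orb m (j+1) = (1 - orb m j) / (m j) := rfl
    have hmj : (0:ℝ) < (m j : ℝ) := by
      have h2 := hm2 j
      have : (2:ℝ) ≤ (m j : ℝ) := by exact_mod_cast h2
      linarith
    rw [heq, mul_div_cancel₀ _ (ne_of_gt hmj)]
  have hupp : ∀ j, N + 1 ≤ j → 2 * orb m j ≤ 1 - x + ε := by
    intro j hj
    obtain ⟨i, rfl⟩ : ∃ i, j = i + 1 := ⟨j - 1, by omega⟩
    have hiN : N ≤ i := by omega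
    have h1 := hN i hiN
    have hmi : (2:ℝ) ≤ (m i : ℝ) := by exact_mod_cast hm2 i
    have h2 := hwrel i
    have h3 := (hb (i+1)).1
    have h4 := (hb i).1
    nlinarith [mul_le_mul_of_nonneg_right hmi h3]
  obtain ⟨c, hc0, hcs⟩ : ∃ c : ℕ → ℝ, c 0 = x ∧
      ∀ k, c (k+1) = 1/3 - (-2:ℝ)^(k+2)*a :=
    ⟨fun k => if k = 0 then x else 1/3 - (-2:ℝ)^(k+1)*a, by simp, fun k => by simp⟩
  have main : ∀ k, k ≤ 2*n+2 → |orb m (s0 - k) - c k| ≤ ((2:ℝ)^(k+1))^2*ε := by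
    intro k
    induction k with
    | zero =>
      intro _
      have h1 := hN s0 (by omega)
      have hr4 : ((2:ℝ)^(0+1))^2*ε = 4*ε := by norm_num
      rw [hc0, abs_le, hr4]
      simp only [Nat.sub_zero]
      constructor <;> linarith
    | succ k ih =>
      intro hk
      have ihk := ih (by omega)
      have hidx : (s0 - (k+1)) + 1 = s0 - k := by omega
      have hjN : N + 2 ≤ s0 - (k+1) := by omega
      have hu1 : 1/6 + a - ε ≤ orb m (s0 - (k+1)) := by
        have h := hN (s0 - (k+1)) (by omega)
        rw [hxeq] at h; linarith
      have hu2 : 2 * orb m (s0 - (k+1)) ≤ 1 - (1/6 + a) + ε := by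
        have h := hupp (s0 - (k+1)) (by omega)
        rw [hxeq] at h; linarith
      have hwj : (m (s0 - (k+1)) : ℝ) * orb m (s0 - k) = 1 - orb m (s0 - (k+1)) := by
        rw [← hidx]; exact hwrel (s0 - (k+1))
      rcases Nat.eq_zero_or_pos k with rfl | hkpos
      · -- k = 0 : use step0
        have hcw : |orb m (s0 - 0) - (1/6 + a)| ≤ 4*ε := by
          rw [← hxeq, ← hc0]
          calc |orb m (s0 - 0) - c 0| ≤ ((2:ℝ)^(0+1))^2*ε := ihk
            _ = 4*ε := by norm_num
        have hres := step0 q a ε (orb m (s0 - 1)) (orb m (s0 - 0)) (m (s0 - 1)) (hm2 _)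
          hq hqa1 hqa2 hε0 hεa hu1 hu2 hwj hcw
        have hc1 : c 1 = 1/3 - 4*a := by
          rw [hcs 0]; norm_num
        rw [hc1]
        calc |orb m (s0 - 1) - (1/3 - 4*a)| ≤ 16*ε := hres
          _ ≤ ((2:ℝ)^(0+1+1))^2*ε := by norm_num
      · -- k ≥ 1 : use stepk
        obtain ⟨k', rfl⟩ : ∃ k', k = k' + 1 := ⟨k - 1, by omega⟩
        have habs : |((-2:ℝ))^(k'+2)| = (2:ℝ)^(k'+2) := by
          rw [abs_pow]; norm_num
        have hs1 : ((-2:ℝ))^(k'+2) ≤ (2:ℝ)^(k'+2) := by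
          rw [← habs]; exact le_abs_self _
        have hs2 : -((2:ℝ)^(k'+2)) ≤ ((-2:ℝ))^(k'+2) := by
          rw [← habs]; exact neg_abs_le _
        have ht2 : (2:ℝ) ≤ (2:ℝ)^(k'+2) := by
          calc (2:ℝ) = 2^1 := by norm_num
            _ ≤ 2^(k'+2) := pow_le_pow_right₀ (by norm_num) (by omega)
        have h2sq : (2:ℝ)^(2*n+2) = 4*q := by
          rw [hqdef, pow_add, pow_mul]; norm_num [mul_comm]
        have ht2q : (2:ℝ)^(k'+2) ≤ 4*q := by
          rw [← h2sq]
          exact pow_le_pow_right₀ (by norm_num) (by omega)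
        have hck : c (k'+1) = 1/3 - ((-2:ℝ))^(k'+2)*a := hcs k'
        have hcw : |orb m (s0 - (k'+1)) - (1/3 - ((-2:ℝ))^(k'+2)*a)| ≤ ((2:ℝ)^(k'+2))^2*ε := by
          rw [← hck]; exact ihk
        have hres := stepk q a ε (orb m (s0 - (k'+1+1))) (orb m (s0 - (k'+1)))
          ((2:ℝ)^(k'+2)) (((-2):ℝ)^(k'+2)) (m (s0 - (k'+1+1))) (hm2 _)
          hq hqa1 hqa2 hε0 hεa hε16 ht2 ht2q hs1 hs2 hu1 hwj hcw
        have hck1 : c (k'+1+1) = 1/3 + 2*(((-2):ℝ)^(k'+2)*a) := by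
          rw [hcs (k'+1)]
          rw [show k'+1+2 = (k'+2)+1 from rfl, pow_succ]
          ring
        have hrad : ((2:ℝ)^(k'+1+1+1))^2*ε = (2*(2:ℝ)^(k'+2))^2*ε := by
          rw [show k'+1+1+1 = (k'+2)+1 from rfl, pow_succ]
          ring
        rw [hck1, hrad]
        exact hres
  -- final contradiction
  have hfin := main (2*n+2) le_rfl
  have hc : c (2*n+2) = 1/3 + 8*q*a := by
    rw [show 2*n+2 = (2*n+1)+1 from rfl, hcs (2*n+1)]
    have hodd : ((-2:ℝ))^(2*n+1+2) = -((2:ℝ)^(2*n+3)) := by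
      have ho : Odd (2*n+3) := ⟨n+1, by ring⟩
      rw [show 2*n+1+2 = 2*n+3 from rfl, ho.neg_pow]
    rw [hodd]
    have h8q : (2:ℝ)^(2*n+3) = 8*q := by
      rw [hqdef, pow_add, pow_mul]; norm_num [mul_comm]
    rw [h8q]; ring
  have hrad : ((2:ℝ)^(2*n+2+1))^2*ε = 64*(q^2*ε) := by
    have h8q : (2:ℝ)^(2*n+3) = 8*q := by
      rw [hqdef, pow_add, pow_mul]; norm_num [mul_comm]
    rw [show 2*n+2+1 = 2*n+3 from rfl, h8q]; ring
  rw [hc, hrad, abs_le] at hfin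
  have hu2 : 2 * orb m (s0 - (2*n+2)) ≤ 1 - x + ε := hupp _ (by omega)
  rw [hxeq] at hu2
  have hq2 : (1:ℝ) ≤ q^2 := by nlinarith [sq_nonneg (q-1)]
  have hεs : ε ≤ 1/100000 := by
    have h := mul_le_mul_of_nonneg_right hq2 hε0.le
    linarith
  have h64 : 64*(q^2*ε) ≤ 4/100000 := by linarith
  linarith [hfin.1, hfin.2]
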